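/- arXiv:2505.00424 — 5 statements merged into one kernel-verified Lean document; each statement's English description precedes it below -/
import Mathlib

section
/- Let r be the relation on Ordinal × Ordinal defined by (α', β') r (α, β) iff α' ≤ α, β' ≤ β, and (α', β') ≠ (α, β). Then r is well-founded, and for all ordinals α and β the rank of the pair (α, β) with respect to r equals α ♯ β. -/
universe u

open Order in
/-- Natural addition (Hessenberg sum) on ordinals, as formerly in Mathlib's
`Mathlib/SetTheory/Ordinal/NaturalOps.lean` (since removed from Mathlib). -/
noncomputable def Ordinal.nadd (a b : Ordinal.{u}) : Ordinal.{u} :=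
  max (⨆ x : Set.Iio a, succ (Ordinal.nadd x.1 b)) (⨆ x : Set.Iio b, succ (Ordinal.nadd a x.1))
termination_by (a, b)
decreasing_by
  · exact Prod.Lex.left _ _ x.2
  · exact Prod.Lex.right _ x.2

infixl:65 " ♯ " => Ordinal.nadd

/-- The componentwise (partial) strict order on pairs of ordinals:
`(α', β') r (α, β)` iff `α' ≤ α`, `β' ≤ β` and `(α', β') ≠ (α, β)`. -/
def pairRel (p q : Ordinal.{0} × Ordinal.{0}) : Prop :=
  p.1 ≤ q.1 ∧ p.2 ≤ q.2 ∧ p ≠ q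

theorem Ordinal.nadd_def' (a b : Ordinal.{u}) : a ♯ b =
    max (⨆ x : Set.Iio a, Order.succ (x.1 ♯ b)) (⨆ x : Set.Iio b, Order.succ (a ♯ x.1)) := by
  rw [Ordinal.nadd]

theorem Ordinal.nadd_lt_nadd_left {b c : Ordinal.{u}} (h : b < c) (a : Ordinal.{u}) :
    a ♯ b < a ♯ c := by
  rw [Ordinal.nadd_def' a c]
  refine lt_of_lt_of_le (Order.lt_succ _) (le_max_of_le_right ?_)
  exact Ordinal.le_iSup (fun x : Set.Iio c => Order.succ (a ♯ x.1)) ⟨b, h⟩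

theorem Ordinal.nadd_lt_nadd_right {a b : Ordinal.{u}} (h : a < b) (c : Ordinal.{u}) :
    a ♯ c < b ♯ c := by
  rw [Ordinal.nadd_def' b c]
  refine lt_of_lt_of_le (Order.lt_succ _) (le_max_of_le_left ?_)
  exact Ordinal.le_iSup (fun x : Set.Iio b => Order.succ (x.1 ♯ c)) ⟨a, h⟩

theorem Ordinal.nadd_lt_nadd_of_lt_of_le {a b c d : Ordinal.{u}} (h : a < b) (h' : c ≤ d) :
    a ♯ c < b ♯ d := by
  refine lt_of_lt_of_le (Ordinal.nadd_lt_nadd_right h c) ?_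
  rcases lt_or_eq_of_le h' with h'' | rfl
  · exact (Ordinal.nadd_lt_nadd_left h'' b).le
  · exact le_rfl

theorem Ordinal.lt_nadd_iff {a b c : Ordinal.{u}} :
    a < b ♯ c ↔ (∃ b' < b, a ≤ b' ♯ c) ∨ ∃ c' < c, a ≤ b ♯ c' := by
  rw [Ordinal.nadd_def' b c, lt_max_iff, Ordinal.lt_iSup_iff, Ordinal.lt_iSup_iff]
  simp only [Order.lt_succ_iff, Subtype.exists, Set.mem_Iio, exists_prop]


theorem pairRel_sub_lex : Subrelation pairRel (Prod.Lex (· < ·) (· < ·)) := by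
  rintro ⟨a, b⟩ ⟨c, d⟩ ⟨h1, h2, h3⟩
  rcases lt_or_eq_of_le h1 with h | rfl
  · exact Prod.Lex.left _ _ h
  · exact Prod.Lex.right _ (lt_of_le_of_ne h2 (by rintro rfl; exact h3 rfl))

theorem pairRel_wf : WellFounded pairRel :=
  Subrelation.wf pairRel_sub_lex (WellFounded.prod_lex (wellFounded_lt) (wellFounded_lt))

/-- The relation `pairRel` is well-founded, and the rank of the pair `(α, β)` with respect to
it equals the Hessenberg natural sum `α ♯ β` (up to the universe lift forced by the fact that
`Ordinal × Ordinal` lives one universe higher than `Ordinal`). -/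
theorem pairRel_wellFounded_and_rank_eq_nadd :
    WellFounded pairRel ∧
      ∀ (hwf : WellFounded pairRel) (α β : Ordinal.{0}),
        @IsWellFounded.rank _ pairRel ⟨hwf⟩ (α, β) = Ordinal.lift.{1} (α ♯ β) := by
  refine ⟨pairRel_wf, fun hwf => ?_⟩
  letI : IsWellFounded (Ordinal.{0} × Ordinal.{0}) pairRel := ⟨hwf⟩
  suffices h : ∀ p : Ordinal.{0} × Ordinal.{0},
      IsWellFounded.rank pairRel p = Ordinal.lift.{1} (p.1 ♯ p.2) by
    exact fun α β => h (α, β)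
  intro p
  induction p using hwf.induction with
  | _ p IH =>
    obtain ⟨α, β⟩ := p
    rw [IsWellFounded.rank_eq]
    apply le_antisymm
    · rw [Ordinal.iSup_le_iff]
      rintro ⟨⟨a, b⟩, hab⟩
      rw [IH _ hab]
      rw [Order.succ_le_iff, Ordinal.lift_lt]
      obtain ⟨h1, h2, h3⟩ := hab
      rcases lt_or_eq_of_le h1 with h | rfl
      · exact Ordinal.nadd_lt_nadd_of_lt_of_le h h2
      · exact Ordinal.nadd_lt_nadd_left (lt_of_le_of_ne h2 (by rintro rfl; exact h3 rfl)) _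
    · refine le_of_forall_lt fun c hc => ?_
      obtain ⟨c, rfl⟩ := Ordinal.mem_range_lift_of_le hc.le
      rw [Ordinal.lift_lt] at hc
      rw [Ordinal.lt_nadd_iff] at hc
      rw [Ordinal.lt_iSup_iff]
      rcases hc with ⟨a, ha, hle⟩ | ⟨b, hb, hle⟩
      · have hrel : pairRel (a, β) (α, β) :=
          ⟨ha.le, le_rfl, fun h => ha.ne (congrArg Prod.fst h)⟩
        refine ⟨⟨(a, β), hrel⟩, ?_⟩
        show Ordinal.lift.{1} c < Order.succ (IsWellFounded.rank pairRel (a, β))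
        rw [IH _ hrel, Order.lt_succ_iff, Ordinal.lift_le]
        exact hle
      · have hrel : pairRel (α, b) (α, β) :=
          ⟨le_rfl, hb.le, fun h => hb.ne (congrArg Prod.snd h)⟩
        refine ⟨⟨(α, b), hrel⟩, ?_⟩
        show Ordinal.lift.{1} c < Order.succ (IsWellFounded.rank pairRel (α, b))
        rw [IH _ hrel, Order.lt_succ_iff, Ordinal.lift_le]
        exact hle
end

section
/- If T : (ℕ → Ordinal) → Ordinal is strictly monotone on z-special elements, then v a ≤ T a for every sequence a : ℕ → Ordinal. -/
/-- `ζ_a`: the least ordinal `ζ` such that `{i | ζ < a i}` is finite. -/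
noncomputable def zetaSeq (a : ℕ → Ordinal.{0}) : Ordinal.{0} :=
  sInf {ζ : Ordinal | {i : ℕ | ζ < a i}.Finite}

/-- `S` is strictly monotone on z-special elements. -/
def StrictMonoOnZSpecial (S : (ℕ → Ordinal.{0}) → Ordinal.{0}) : Prop :=
  ∀ a b : ℕ → Ordinal, (∀ i, a i ≤ b i) →
    (∃ j : ℕ, zetaSeq a < b j ∧ a j < b j) → S a < S b

/-- `b ≺ a` iff there are an index `i₀`, a finite set `F ⊆ ℕ` and an ordinal `β` with
`b i₀ ≤ β < a i₀`, `b i ≤ a i` for all `i`, and `b i ≤ β` for all `i ∉ F`. -/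
def seqPrec (b a : ℕ → Ordinal.{0}) : Prop :=
  ∃ (i₀ : ℕ) (F : Finset ℕ) (β : Ordinal),
    b i₀ ≤ β ∧ β < a i₀ ∧ (∀ i, b i ≤ a i) ∧ ∀ i ∉ F, b i ≤ β

/-- `v a`: the rank of the sequence `a` in the well-founded relation `≺`. -/
noncomputable def vRank (hwf : WellFounded seqPrec) (a : ℕ → Ordinal.{0}) : Ordinal.{1} :=
  @IsWellFounded.rank _ seqPrec ⟨hwf⟩ a

/-! The rank is the least function that strictly increases along `≺`, and every `T` that is
strictly monotone on z-special elements strictly increases along `≺`: if `b ≺ a` is witnessed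
by `i₀, F, β`, then all but finitely many `b i` are at most `β`, so `ζ_b ≤ β < a i₀`. -/

theorem IsWellFounded.rank_le_of_lt_of_rel {α : Type*} {r : α → α → Prop} [IsWellFounded α r]
    (f : α → Ordinal) (hf : ∀ ⦃a b⦄, r a b → f a < f b) (a : α) : rank r a ≤ f a := by
  induction a using IsWellFounded.induction r with
  | _ a ih =>
    rw [rank_eq]
    exact Ordinal.iSup_le fun ⟨b, hb⟩ => Order.succ_le_of_lt ((ih b hb).trans_lt (hf hb))

theorem zetaSeq_le_of_forall_notMem_le {a : ℕ → Ordinal.{0}} {β : Ordinal.{0}} (F : Finset ℕ)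
    (h : ∀ i ∉ F, a i ≤ β) : zetaSeq a ≤ β :=
  csInf_le (OrderBot.bddBelow _) <|
    F.finite_toSet.subset fun i hi => by_contra fun hiF => (h i hiF).not_gt hi

theorem StrictMonoOnZSpecial.lt_of_seqPrec {T : (ℕ → Ordinal.{0}) → Ordinal.{0}}
    (hT : StrictMonoOnZSpecial T) {a b : ℕ → Ordinal.{0}} (h : seqPrec b a) : T b < T a := by
  obtain ⟨i₀, F, β, hbβ, hβa, hba, hF⟩ := h
  exact hT b a hba ⟨i₀, (zetaSeq_le_of_forall_notMem_le F hF).trans_lt hβa, hbβ.trans_lt hβa⟩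

/-- If `T` is strictly monotone on z-special elements, then `v a ≤ T a` for every
sequence `a` (up to the universe lift forced by the fact that `ℕ → Ordinal` lives one
universe higher than `Ordinal`). -/
theorem vRank_le_of_strictMonoOnZSpecial
    (hwf : WellFounded seqPrec)
    (T : (ℕ → Ordinal.{0}) → Ordinal.{0}) (hT : StrictMonoOnZSpecial T) :
    ∀ a : ℕ → Ordinal.{0}, vRank hwf a ≤ Ordinal.lift.{1} (T a) :=
  have : IsWellFounded _ seqPrec := ⟨hwf⟩
  IsWellFounded.rank_le_of_lt_of_rel (fun a => Ordinal.lift.{1} (T a))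
    fun _ _ h => Ordinal.lift_lt.mpr (hT.lt_of_seqPrec h)
end

section
/- The rank function v on ω-sequences of ordinals is weakly monotone and strictly monotone on z-special elements; consequently (by its minimality) v is the smallest operation (ℕ → Ordinal) → Ordinal that is weakly monotone and strictly monotone on z-special elements. -/
/-- `S` is weakly monotone. -/
def WeaklyMonotone (S : (ℕ → Ordinal.{0}) → Ordinal.{0}) : Prop :=
  ∀ a b : ℕ → Ordinal, (∀ i, a i ≤ b i) → S a ≤ S b

/-!
`b ≺ a` holds exactly when `b ≤ a` pointwise and the pair is z-special: the finite exceptional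
set can always be taken to be `{i | ζ_b < b i}` and the bound `β` to be `max (b i₀) ζ_b`.
So the rank is strictly monotone on z-special pairs by construction, weakly monotone because
enlarging `a` only enlarges its set of predecessors, and below every operation strictly monotone
on z-special pairs by well-founded induction.
-/

universe u

namespace IsWellFounded

variable {α : Type u} {r : α → α → Prop} [IsWellFounded α r]

theorem rank_le_rank_of_forall_rel_imp {a b : α} (h : ∀ c, r c a → r c b) :
    rank r a ≤ rank r b := by
  rw [rank_eq]
  exact Ordinal.iSup_le fun ⟨c, hc⟩ => Order.succ_le_of_lt (rank_lt_of_rel (h c hc))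

theorem rank_le_of_rel_imp_lt {f : α → Ordinal.{u}} (hf : ∀ a b, r a b → f a < f b) (a : α) :
    rank r a ≤ f a := by
  induction a using IsWellFounded.induction r with
  | _ a ih =>
    rw [rank_eq]
    exact Ordinal.iSup_le fun ⟨c, hc⟩ => Order.succ_le_of_lt ((ih c hc).trans_lt (hf c a hc))

end IsWellFounded

theorem finite_setOf_zetaSeq_lt (a : ℕ → Ordinal.{0}) : {i : ℕ | zetaSeq a < a i}.Finite := by
  refine csInf_mem (s := {ζ : Ordinal | {i : ℕ | ζ < a i}.Finite}) ⟨⨆ i, a i, ?_⟩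
  simp [(Ordinal.le_iSup a _).not_gt]

theorem seqPrec_iff {b a : ℕ → Ordinal.{0}} :
    seqPrec b a ↔ (∀ i, b i ≤ a i) ∧ ∃ j, zetaSeq b < a j ∧ b j < a j := by
  constructor
  · rintro ⟨i₀, F, β, hb, hβ, hle, hoff⟩
    have hzeta : zetaSeq b ≤ β := csInf_le' <| F.finite_toSet.subset fun i hi => by
      by_contra hiF
      exact (hoff i hiF).not_gt hi
    exact ⟨hle, i₀, hzeta.trans_lt hβ, hb.trans_lt hβ⟩
  · rintro ⟨hle, j, hzeta, hj⟩
    refine ⟨j, (finite_setOf_zetaSeq_lt b).toFinset, max (b j) (zetaSeq b), le_max_left _ _,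
      max_lt hj hzeta, hle, fun i hi => le_max_of_le_right ?_⟩
    simpa using hi

theorem seqPrec.trans_le {c a b : ℕ → Ordinal.{0}} (hca : seqPrec c a) (hab : ∀ i, a i ≤ b i) :
    seqPrec c b := by
  obtain ⟨i₀, F, β, hc, hβ, hle, hoff⟩ := hca
  exact ⟨i₀, F, β, hc, hβ.trans_le (hab i₀), fun i => (hle i).trans (hab i), hoff⟩

/-- The rank function `v` is weakly monotone and strictly monotone on z-special elements,
and (by its minimality) it is pointwise below every weakly monotone operation which is
strictly monotone on z-special elements, i.e. it is the smallest such operation (the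
universe lift is forced by the fact that `ℕ → Ordinal` lives one universe higher than
`Ordinal`). -/
theorem vRank_weaklyMonotone_strictMonoOnZSpecial_smallest
    (hwf : WellFounded seqPrec) :
    (∀ a b : ℕ → Ordinal.{0}, (∀ i, a i ≤ b i) → vRank hwf a ≤ vRank hwf b) ∧
      (∀ a b : ℕ → Ordinal.{0}, (∀ i, a i ≤ b i) →
        (∃ j : ℕ, zetaSeq a < b j ∧ a j < b j) → vRank hwf a < vRank hwf b) ∧
      ∀ T : (ℕ → Ordinal.{0}) → Ordinal.{0},
        WeaklyMonotone T → StrictMonoOnZSpecial T →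
          ∀ a : ℕ → Ordinal.{0}, vRank hwf a ≤ Ordinal.lift.{1} (T a) := by
  have : IsWellFounded _ seqPrec := ⟨hwf⟩
  refine ⟨fun a b hab => ?_, fun a b hab hspecial => ?_, fun T _ hT => ?_⟩
  · exact IsWellFounded.rank_le_rank_of_forall_rel_imp fun c hc => hc.trans_le hab
  · exact IsWellFounded.rank_lt_of_rel (seqPrec_iff.2 ⟨hab, hspecial⟩)
  · refine IsWellFounded.rank_le_of_rel_imp_lt fun b a hba => Ordinal.lift_lt.2 ?_
    exact hT b a (seqPrec_iff.1 hba).1 (seqPrec_iff.1 hba).2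
end

section
/- For every permutation e : ℕ ≃ ℕ and every sequence a : ℕ → Ordinal, v (a ∘ e) = v a; that is, the smallest weakly monotone operation strictly monotone on z-special elements is invariant under permutations of the summands. -/
universe u

theorem IsWellFounded.rank_relIso {α β : Type u} {r : α → α → Prop} {s : β → β → Prop}
    [IsWellFounded α r] [IsWellFounded β s] (f : r ≃r s) (a : α) :
    rank s (f a) = rank r a := by
  induction a using IsWellFounded.induction r with
  | _ a ih =>
    rw [rank_eq, rank_eq]
    symm
    refine Equiv.iSup_congr (f.toEquiv.subtypeEquiv fun b => f.map_rel_iff.symm) ?_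
    rintro ⟨b, hb⟩
    exact congrArg Order.succ (ih b hb)

theorem seqPrec.comp_perm (e : Equiv.Perm ℕ) {b a : ℕ → Ordinal.{0}} (h : seqPrec b a) :
    seqPrec (b ∘ e) (a ∘ e) := by
  obtain ⟨i₀, F, β, hb, hβ, hle, hF⟩ := h
  refine ⟨e.symm i₀, F.image e.symm, β, by simpa using hb, by simpa using hβ,
    fun i => hle (e i), fun i hi => hF (e i) fun heF => hi ?_⟩
  exact Finset.mem_image.2 ⟨e i, heF, e.symm_apply_apply i⟩

theorem seqPrec_comp_perm_iff (e : Equiv.Perm ℕ) {b a : ℕ → Ordinal.{0}} :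
    seqPrec (b ∘ e) (a ∘ e) ↔ seqPrec b a := by
  refine ⟨fun h => ?_, seqPrec.comp_perm e⟩
  simpa [Function.comp_assoc] using h.comp_perm e.symm

/-- The automorphism `a ↦ a ∘ e` of `≺`. -/
def seqPrecCompPerm (e : Equiv.Perm ℕ) : seqPrec ≃r seqPrec where
  toEquiv := e.symm.arrowCongr (Equiv.refl _)
  map_rel_iff' := seqPrec_comp_perm_iff e

/-- `v` is invariant under permutations of the summands. -/
theorem vRank_comp_perm (hwf : WellFounded seqPrec) (e : Equiv.Perm ℕ)
    (a : ℕ → Ordinal.{0}) :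
    vRank hwf (a ∘ e) = vRank hwf a :=
  @IsWellFounded.rank_relIso _ _ _ _ ⟨hwf⟩ ⟨hwf⟩ (seqPrecCompPerm e) a
end

section
/- Suppose γ ≥ v a and γ is a mixed sum of the family (a i)_{i < ω} via an order respecting modulo finite realization (A_i)_{i < ω}. Let η < γ and, for each i, let b i be the order type of A_i ∩ {θ | θ < η}. Then v b < v a. -/
/-- The order type of a set of ordinals, with the order inherited from the ordinals.
(It lives one universe higher, since `Set Ordinal` does.) -/
noncomputable def otype (A : Set Ordinal.{0}) : Ordinal.{1} :=
  Ordinal.type (Subrel ((· < ·) : Ordinal.{0} → Ordinal.{0} → Prop) (· ∈ A))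

/-- Given a realization `A`, `relRank A η` is `h(η)`: the order type of the set of elements
of `A` below `η`. -/
noncomputable def relRank (A : Set Ordinal.{0}) (η : Ordinal.{0}) : Ordinal.{1} :=
  otype {x | x ∈ A ∧ x < η}

/-- `A` realizes `γ` as a mixed sum of the sequence `a`, and the realization is
order respecting modulo finite (ormf): the `A i` are pairwise disjoint, their union is
`{ξ | ξ < γ}`, `A i` has order type `a i`, and for every `i` and `η ∈ A i` the set of `j`
for which some `θ ∈ A j` satisfies `θ < η` and `h_j(θ) ≥ h_i(η)` is finite. -/
def IsOrmfMixedSum (γ : Ordinal.{0}) (a : ℕ → Ordinal.{0}) (A : ℕ → Set Ordinal.{0}) :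
    Prop :=
  (∀ i j, i ≠ j → Disjoint (A i) (A j)) ∧
  (⋃ i, A i) = Set.Iio γ ∧
  (∀ i, otype (A i) = Ordinal.lift.{1} (a i)) ∧
  ∀ i : ℕ, ∀ η ∈ A i,
    {j : ℕ | ∃ θ ∈ A j, θ < η ∧ relRank (A i) η ≤ relRank (A j) θ}.Finite

section Aux

lemma otype_mono {S T : Set Ordinal.{0}} (h : S ⊆ T) : otype S ≤ otype T := by
  rw [otype, otype, Ordinal.type_le_iff']
  exact ⟨⟨⟨Set.inclusion h, Set.inclusion_injective h⟩, Iff.rfl⟩⟩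

/-- The order type of the part of `S` below a member `θ` is the `typein` of `θ`. -/
lemma otype_lt_eq_typein {S : Set Ordinal.{0}} {θ : Ordinal} (hθ : θ ∈ S) :
    otype {x | x ∈ S ∧ x < θ} =
      Ordinal.typein (Subrel ((· < ·) : Ordinal → Ordinal → Prop) (· ∈ S)) ⟨θ, hθ⟩ := by
  rw [← Ordinal.type_subrel, otype]
  refine Quotient.sound ⟨⟨⟨fun x => ⟨⟨x.1, x.2.1⟩, x.2.2⟩,
    fun x => ⟨x.1.1, x.1.2, x.2⟩, fun x => rfl, fun x => rfl⟩, Iff.rfl⟩⟩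

lemma relRank_eq_typein {S : Set Ordinal.{0}} {θ : Ordinal} (hθ : θ ∈ S) :
    relRank S θ = Ordinal.typein (Subrel ((· < ·) : Ordinal → Ordinal → Prop) (· ∈ S)) ⟨θ, hθ⟩ :=
  otype_lt_eq_typein hθ

lemma relRank_lt_otype {S : Set Ordinal.{0}} {θ : Ordinal} (hθ : θ ∈ S) :
    relRank S θ < otype S := by
  rw [relRank_eq_typein hθ]; exact Ordinal.typein_lt_type _ _

lemma exists_relRank_eq {S : Set Ordinal.{0}} {ρ : Ordinal.{1}} (h : ρ < otype S) :
    ∃ θ, ∃ hθ : θ ∈ S, relRank S θ = ρ := by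
  set θ := Ordinal.enum (Subrel ((· < ·) : Ordinal → Ordinal → Prop) (· ∈ S)) ⟨ρ, h⟩ with hθdef
  exact ⟨θ.1, θ.2, (relRank_eq_typein θ.2).trans (Ordinal.typein_enum _ h)⟩

end Aux

/-- If `γ ≥ v a` is realized as an ormf mixed sum of `a` by `A`, `η < γ`, and `b i` is the
order type of `A i ∩ {θ | θ < η}` for each `i`, then `v b < v a`. -/
theorem vRank_restriction_lt (hwf : WellFounded seqPrec)
    (a : ℕ → Ordinal.{0}) (γ : Ordinal.{0}) (A : ℕ → Set Ordinal.{0})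
    (hγ : vRank hwf a ≤ Ordinal.lift.{1} γ) (hA : IsOrmfMixedSum γ a A)
    (η : Ordinal.{0}) (hη : η < γ) (b : ℕ → Ordinal.{0})
    (hb : ∀ i, Ordinal.lift.{1} (b i) = otype (A i ∩ Set.Iio η)) :
    vRank hwf b < vRank hwf a := by
  obtain ⟨hdisj, hunion, hot, hormf⟩ := hA
  -- η belongs to some A i₀
  have hηmem : η ∈ ⋃ i, A i := by rw [hunion]; exact hη
  obtain ⟨_, ⟨i₀, rfl⟩, hi₀⟩ := hηmem
  -- b i ≤ a i for all i
  have hba : ∀ i, b i ≤ a i := by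
    intro i
    rw [← Ordinal.lift_le.{1}, hb i, ← hot i]
    exact otype_mono Set.inter_subset_left
  -- key: lift (b i₀) = relRank (A i₀) η
  have hkey : Ordinal.lift.{1} (b i₀) = relRank (A i₀) η := by
    rw [hb i₀]; rfl
  -- b i₀ < a i₀
  have hia : b i₀ < a i₀ := by
    rw [← Ordinal.lift_lt.{1}, hkey, ← hot i₀]
    exact relRank_lt_otype hi₀
  -- the finite set from ormf
  have hfin := hormf i₀ η hi₀
  refine IsWellFounded.rank_lt_of_rel (r := seqPrec) (hwf := ⟨hwf⟩)
    ⟨i₀, hfin.toFinset, b i₀, le_refl _, hia, hba, ?_⟩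
  intro j hj
  rw [Set.Finite.mem_toFinset] at hj
  by_contra hbj
  push_neg at hbj
  -- lift (b i₀) < lift (b j) = otype (A j ∩ Iio η)
  have h1 : relRank (A i₀) η < otype (A j ∩ Set.Iio η) := by
    rw [← hb j, ← hkey, Ordinal.lift_lt]; exact hbj
  obtain ⟨θ, ⟨hθA, hθη⟩, hθr⟩ := exists_relRank_eq h1
  refine hj ⟨θ, hθA, hθη, ?_⟩
  have : relRank (A j ∩ Set.Iio η) θ = relRank (A j) θ := by
    unfold relRank
    congr 1
    ext x
    constructor
    · rintro ⟨⟨hx, _⟩, hxθ⟩; exact ⟨hx, hxθ⟩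
    · rintro ⟨hx, hxθ⟩; exact ⟨⟨hx, lt_trans hxθ hθη⟩, hxθ⟩
  rw [← this, hθr]
end
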